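/- arXiv:2108.12697 — 2 statements merged into one kernel-verified Lean document; each statement's English description precedes it below -/
import Mathlib

section
/- Let U : A → B be a functor such that for every object A of A the induced functor U_A : A/A → B/U(A) on slice categories has a left adjoint L_A. Then for every morphism u : A₁ → A₂ in A and every object f : B → U(A₁) of B/U(A₁), the object L_{A₂}(U(u) ∘ f) is isomorphic in A/A₂ to u ∘ L_{A₁}(f) (the Beck–Chevalley condition for local right adjoints). -/
open CategoryTheory CategoryTheory.Limits

namespace BCaux

variable {A B : Type*} [Category A] [Category B] (U : A ⥤ B)
variable {A₁ A₂ : A} (u : A₁ ⟶ A₂)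
variable (L₂ : Over (U.obj A₂) ⥤ Over A₂) (adj₂ : L₂ ⊣ Over.post (X := A₂) U)

/-- The canonical map from `(Over.map (U.map u)).obj f` to `Over.post U` of `Over.mk u`. -/
def m (f : Over (U.obj A₁)) :
    (Over.map (U.map u)).obj f ⟶ (Over.post (X := A₂) U).obj (Over.mk u) :=
  Over.homMk f.hom (by rfl)

@[simp] lemma m_left (f : Over (U.obj A₁)) : (m U u f).left = f.hom := rfl

/-- Its adjunct under `adj₂`. -/
def w (f : Over (U.obj A₁)) : L₂.obj ((Over.map (U.map u)).obj f) ⟶ Over.mk u :=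
  (adj₂.homEquiv _ _).symm (m U u f)

lemma homEquiv_w (f : Over (U.obj A₁)) :
    (adj₂.homEquiv _ _) (w U u L₂ adj₂ f) = m U u f :=
  (adj₂.homEquiv _ _).apply_symm_apply _

lemma w_w (f : Over (U.obj A₁)) :
    (w U u L₂ adj₂ f).left ≫ u = (L₂.obj ((Over.map (U.map u)).obj f)).hom := by
  simpa using Over.w (w U u L₂ adj₂ f)

/-- Object part of the sliced left adjoint. -/
def L'obj (f : Over (U.obj A₁)) : Over A₁ := Over.mk (w U u L₂ adj₂ f).left

@[simp] lemma L'obj_hom (f : Over (U.obj A₁)) :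
    (L'obj U u L₂ adj₂ f).hom = (w U u L₂ adj₂ f).left := rfl

/-- The map `(Over.map u).obj Y ⟶ Over.mk u`. -/
def q (Y : Over A₁) : (Over.map u).obj Y ⟶ Over.mk u := Over.homMk Y.hom (by simp)

@[simp] lemma q_left (Y : Over A₁) : (q u Y).left = Y.hom := rfl

def kbar {f : Over (U.obj A₁)} {Y : Over A₁} (k : L'obj U u L₂ adj₂ f ⟶ Y) :
    L₂.obj ((Over.map (U.map u)).obj f) ⟶ (Over.map u).obj Y :=
  Over.homMk k.left (by
    have h1 : k.left ≫ Y.hom = (w U u L₂ adj₂ f).left := by exact Over.w k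
    have h2 := w_w U u L₂ adj₂ f
    change k.left ≫ Y.hom ≫ u = _
    exact (Category.assoc _ _ _).symm.trans ((congrArg (· ≫ u) h1).trans h2))

@[simp] lemma kbar_left {f : Over (U.obj A₁)} {Y : Over A₁} (k : L'obj U u L₂ adj₂ f ⟶ Y) :
    (kbar U u L₂ adj₂ k).left = k.left := rfl

lemma kbar_q {f : Over (U.obj A₁)} {Y : Over A₁} (k : L'obj U u L₂ adj₂ f ⟶ Y) :
    kbar U u L₂ adj₂ k ≫ q u Y = w U u L₂ adj₂ f := by
  apply Over.OverMorphism.ext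
  have h1 : k.left ≫ Y.hom = (w U u L₂ adj₂ f).left := by exact Over.w k
  exact h1

def hbar {f : Over (U.obj A₁)} {Y : Over A₁} (h : f ⟶ (Over.post (X := A₁) U).obj Y) :
    (Over.map (U.map u)).obj f ⟶ (Over.post (X := A₂) U).obj ((Over.map u).obj Y) :=
  Over.homMk h.left (by
    have h1 : h.left ≫ U.map Y.hom = f.hom := by exact Over.w h
    change h.left ≫ U.map (Y.hom ≫ u) = f.hom ≫ U.map u
    rw [U.map_comp]
    exact (Category.assoc _ _ _).symm.trans (congrArg (· ≫ U.map u) h1))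

@[simp] lemma hbar_left {f : Over (U.obj A₁)} {Y : Over A₁}
    (h : f ⟶ (Over.post (X := A₁) U).obj Y) : (hbar U u h).left = h.left := rfl

lemma hbar_q {f : Over (U.obj A₁)} {Y : Over A₁} (h : f ⟶ (Over.post (X := A₁) U).obj Y) :
    hbar U u h ≫ (Over.post (X := A₂) U).map (q u Y) = m U u f := by
  apply Over.OverMorphism.ext
  have h1 : h.left ≫ U.map Y.hom = f.hom := by exact Over.w h
  exact h1

lemma toFun_w {f : Over (U.obj A₁)} {Y : Over A₁} (k : L'obj U u L₂ adj₂ f ⟶ Y) :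
    ((adj₂.homEquiv _ _) (kbar U u L₂ adj₂ k)).left ≫ ((Over.post (X := A₁) U).obj Y).hom
      = f.hom := by
  have h4 := congrArg (adj₂.homEquiv _ _) (kbar_q U u L₂ adj₂ k)
  rw [Adjunction.homEquiv_naturality_right, homEquiv_w] at h4
  have h5 := congrArg CommaMorphism.left h4
  exact h5

lemma invFun_w {f : Over (U.obj A₁)} {Y : Over A₁} (h : f ⟶ (Over.post (X := A₁) U).obj Y) :
    ((adj₂.homEquiv _ _).symm (hbar U u h)).left ≫ Y.hom = (L'obj U u L₂ adj₂ f).hom := by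
  have h4 := congrArg (adj₂.homEquiv _ _).symm (hbar_q U u h)
  rw [Adjunction.homEquiv_naturality_right_symm] at h4
  rw [show (adj₂.homEquiv _ _).symm (m U u f) = w U u L₂ adj₂ f from rfl] at h4
  have h5 := congrArg CommaMorphism.left h4
  simpa using h5

def e (f : Over (U.obj A₁)) (Y : Over A₁) :
    (L'obj U u L₂ adj₂ f ⟶ Y) ≃ (f ⟶ (Over.post (X := A₁) U).obj Y) where
  toFun k := Over.homMk ((adj₂.homEquiv _ _) (kbar U u L₂ adj₂ k)).left
    (toFun_w U u L₂ adj₂ k)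
  invFun h := Over.homMk ((adj₂.homEquiv _ _).symm (hbar U u h)).left
    (invFun_w U u L₂ adj₂ h)
  left_inv k := by
    apply Over.OverMorphism.ext
    have h1 : hbar U u (Over.homMk ((adj₂.homEquiv _ _) (kbar U u L₂ adj₂ k)).left
        (toFun_w U u L₂ adj₂ k)) = (adj₂.homEquiv _ _) (kbar U u L₂ adj₂ k) := by
      apply Over.OverMorphism.ext; rfl
    have h2 := congrArg (fun t => ((adj₂.homEquiv _ _).symm t).left) h1
    dsimp only at h2 ⊢
    exact h2.trans (by rw [Equiv.symm_apply_apply]; rfl)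
  right_inv h := by
    apply Over.OverMorphism.ext
    have h1 : kbar U u L₂ adj₂ (Over.homMk ((adj₂.homEquiv _ _).symm (hbar U u h)).left
        (invFun_w U u L₂ adj₂ h)) = (adj₂.homEquiv _ _).symm (hbar U u h) := by
      apply Over.OverMorphism.ext; rfl
    have h2 := congrArg (fun t => ((adj₂.homEquiv _ _) t).left) h1
    dsimp only at h2 ⊢
    exact h2.trans (by rw [Equiv.apply_symm_apply]; rfl)

lemma he (f : Over (U.obj A₁)) (Y Y' : Over A₁) (g : Y ⟶ Y') (k : L'obj U u L₂ adj₂ f ⟶ Y) :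
    e U u L₂ adj₂ f Y' (k ≫ g) = e U u L₂ adj₂ f Y k ≫ (Over.post (X := A₁) U).map g := by
  apply Over.OverMorphism.ext
  have hk : kbar U u L₂ adj₂ (k ≫ g) = kbar U u L₂ adj₂ k ≫ (Over.map u).map g := by
    apply Over.OverMorphism.ext; rfl
  dsimp [e]
  simp only [hk]
  exact (congrArg CommaMorphism.left (adj₂.homEquiv_naturality_right _ _)).trans (by rfl)

/-- The sliced adjunction. -/
def adj' : Adjunction.leftAdjointOfEquiv (e U u L₂ adj₂) (he U u L₂ adj₂) ⊣
    Over.post (X := A₁) U :=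
  Adjunction.adjunctionOfEquivLeft _ _

end BCaux

open BCaux in
/-- Beck–Chevalley condition for local right adjoints: if every slice functor
`U_A : A/A → B/U(A)` of `U` has a left adjoint `L_A`, then for every
`u : A₁ ⟶ A₂` and every object `f : B ⟶ U(A₁)` of `B/U(A₁)`, the object
`L_{A₂}(U(u) ∘ f)` is isomorphic in `A/A₂` to `u ∘ L_{A₁}(f)`. -/
theorem local_right_adjoint_beck_chevalley {A B : Type*} [Category A] [Category B]
    (U : A ⥤ B) (Ladj : ∀ X : A, Over (U.obj X) ⥤ Over X)
    (adj : ∀ X : A, Ladj X ⊣ Over.post (X := X) U)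
    {A₁ A₂ : A} (u : A₁ ⟶ A₂) (f : Over (U.obj A₁)) :
    Nonempty ((Ladj A₂).obj ((Over.map (U.map u)).obj f) ≅
      (Over.map u).obj ((Ladj A₁).obj f)) := by
  constructor
  have i1 : (Ladj A₁).obj f ≅ L'obj U u (Ladj A₂) (adj A₂) f :=
    ((adj A₁).leftAdjointUniq (adj' U u (Ladj A₂) (adj A₂))).app f
  refine ?_ ≪≫ (Over.map u).mapIso i1.symm
  refine Over.isoMk (Iso.refl _) ?_
  have := w_w U u (Ladj A₂) (adj A₂) f
  simpa [L'obj] using this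
end

section
/- A functor U : A → B is a local right adjoint (every slice functor U_A : A/A → B/U(A) has a left adjoint) if and only if it is stable: every morphism f : B → U(A) factors as U(u) ∘ n with n a U-generic morphism, where n : B → U(A') is U-generic if every commutative square U(v) ∘ n = U(w) ∘ g with g : B → U(A₁), v : A' → A₂, w : A₁ → A₂ admits a unique diagonal filler d : A' → A₁ in A with U(d) ∘ n = g and w ∘ d = v. -/
open CategoryTheory CategoryTheory.Limits

/-- A morphism `n : X ⟶ U(A')` is `U`-generic if every commutative square
`g ≫ U(w) = n ≫ U(v)` with `v : A' ⟶ A₂`, `w : A₁ ⟶ A₂` in `A` admits a unique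
diagonal filler `d : A' ⟶ A₁` in `A` with `n ≫ U(d) = g` and `d ≫ w = v`. -/
def UGeneric {A B : Type*} [Category A] [Category B] (U : A ⥤ B)
    {X : B} {A' : A} (n : X ⟶ U.obj A') : Prop :=
  ∀ {A₁ A₂ : A} (v : A' ⟶ A₂) (w : A₁ ⟶ A₂) (g : X ⟶ U.obj A₁),
    g ≫ U.map w = n ≫ U.map v →
    ∃! d : A' ⟶ A₁, n ≫ U.map d = g ∧ d ≫ w = v


section Aux
variable {A B : Type*} [Category A] [Category B] (U : A ⥤ B)

/-- From a left adjoint to the slice functor at `X`, every `f : Y ⟶ U X` has a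
universal factorization. -/
lemma exists_universal_factorization
    {X : A} {Y : B}
    (hX : ∃ L : Over (U.obj X) ⥤ Over X, Nonempty (L ⊣ Over.post (X := X) U))
    (f : Y ⟶ U.obj X) :
    ∃ (A' : A) (n : Y ⟶ U.obj A') (u : A' ⟶ X),
      n ≫ U.map u = f ∧
      ∀ (C : A) (t : C ⟶ X) (h : Y ⟶ U.obj C), h ≫ U.map t = f →
        ∃! k : A' ⟶ C, k ≫ t = u ∧ n ≫ U.map k = h := by
  obtain ⟨L, ⟨adj⟩⟩ := hX
  set F : Over (U.obj X) := Over.mk f with hF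
  refine ⟨(L.obj F).left, (adj.unit.app F).left, (L.obj F).hom, ?_, ?_⟩
  · exact Over.w (adj.unit.app F)
  · intro C t h hht
    have hh : h ≫ ((Over.post (X := X) U).obj (Over.mk t)).hom = F.hom := by exact hht
    set G : Over X := Over.mk t with hG
    set hhm : F ⟶ (Over.post (X := X) U).obj G := Over.homMk h hh with hhm_def
    set k₀ : L.obj F ⟶ G := (adj.homEquiv F G).symm hhm with k₀_def
    have hk₀ : adj.unit.app F ≫ (Over.post (X := X) U).map k₀ = hhm := by
      have := (adj.homEquiv F G).apply_symm_apply hhm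
      rw [Adjunction.homEquiv_unit] at this
      simpa [k₀_def] using this
    refine ⟨k₀.left, ⟨Over.w k₀, by exact congrArg CommaMorphism.left hk₀⟩, ?_⟩
    rintro k' ⟨hk'1, hk'2⟩
    have : Over.homMk k' hk'1 = k₀ := by
      rw [k₀_def, Equiv.eq_symm_apply, Adjunction.homEquiv_unit]
      ext
      exact hk'2
    simpa using congrArg CommaMorphism.left this
end Aux

/-- A functor `U : A ⥤ B` is a local right adjoint (every slice functor
`U_A : A/A → B/U(A)` has a left adjoint) if and only if it is stable: every
morphism `f : Y ⟶ U(A)` factors as `U(u) ∘ n` with `n` a `U`-generic morphism. -/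
theorem local_right_adjoint_iff_stable {A B : Type*} [Category A] [Category B]
    (U : A ⥤ B) :
    (∀ X : A, ∃ L : Over (U.obj X) ⥤ Over X, Nonempty (L ⊣ Over.post (X := X) U)) ↔
    (∀ (X : A) (Y : B) (f : Y ⟶ U.obj X),
      ∃ (A' : A) (n : Y ⟶ U.obj A') (u : A' ⟶ X),
        UGeneric U n ∧ n ≫ U.map u = f) := by
  constructor
  · intro hL X Y f
    obtain ⟨A', n, u, hfac, P⟩ := exists_universal_factorization U (hL X) f
    -- Step 1: `n` with the identity is universal over `A'`.
    obtain ⟨A₀, n₀, u₀, hfac₀, P₀⟩ := exists_universal_factorization U (hL A') n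
    obtain ⟨k, ⟨hk1, hk2⟩, _⟩ := P A₀ (u₀ ≫ u) n₀ (by rw [U.map_comp, ← Category.assoc, hfac₀, hfac])
    have hku₀ : k ≫ u₀ = 𝟙 A' := by
      obtain ⟨m, hm, hmu⟩ := P A' u n (by rw [hfac])
      rw [hmu (k ≫ u₀) ⟨by rw [Category.assoc, hk1], by rw [U.map_comp, ← Category.assoc, hk2, hfac₀]⟩,
        hmu (𝟙 A') ⟨Category.id_comp u, by simp⟩]
    have hu₀k : u₀ ≫ k = 𝟙 A₀ := by
      obtain ⟨m, hm, hmu⟩ := P₀ A₀ u₀ n₀ hfac₀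
      rw [hmu (u₀ ≫ k) ⟨by rw [Category.assoc, hku₀, Category.comp_id], by rw [U.map_comp, ← Category.assoc, hfac₀, hk2]⟩,
        hmu (𝟙 A₀) ⟨Category.id_comp u₀, by simp⟩]
    have Q : ∀ (C : A) (t : C ⟶ A') (h : Y ⟶ U.obj C), h ≫ U.map t = n →
        ∃! k' : A' ⟶ C, k' ≫ t = 𝟙 A' ∧ n ≫ U.map k' = h := by
      intro C t h hht
      obtain ⟨m, ⟨hm1, hm2⟩, hmu⟩ := P₀ C t h hht
      refine ⟨k ≫ m, ⟨by rw [Category.assoc, hm1, hku₀], by rw [U.map_comp, ← Category.assoc, hk2, hm2]⟩, ?_⟩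
      rintro k'' ⟨h1, h2⟩
      have : u₀ ≫ k'' = m :=
        hmu _ ⟨by rw [Category.assoc, h1, Category.comp_id], by rw [U.map_comp, ← Category.assoc, hfac₀, h2]⟩
      rw [← this, ← Category.assoc, hku₀, Category.id_comp]
    -- Step 2: genericity.
    refine ⟨A', n, u, ?_, hfac⟩
    intro A₁ A₂ v w g hsq
    obtain ⟨A₀', n', u', hfac', P'⟩ := exists_universal_factorization U (hL A₂) (n ≫ U.map v)
    obtain ⟨e, ⟨he1, he2⟩, _⟩ := P' A' v n rfl
    obtain ⟨k₁, ⟨hk₁1, hk₁2⟩, _⟩ := Q A₀' e n' he2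
    have hk₁u' : k₁ ≫ u' = v := by rw [← he1, ← Category.assoc, hk₁1, Category.id_comp]
    have hek₁ : e ≫ k₁ = 𝟙 A₀' := by
      obtain ⟨m, hm, hmu⟩ := P' A₀' u' n' hfac'
      rw [hmu (e ≫ k₁) ⟨by rw [Category.assoc, hk₁u', he1], by rw [U.map_comp, ← Category.assoc, he2, hk₁2]⟩,
        hmu (𝟙 A₀') ⟨Category.id_comp u', by simp⟩]
    obtain ⟨e', ⟨he'1, he'2⟩, he'u⟩ := P' A₁ w g hsq
    refine ⟨k₁ ≫ e', ⟨by rw [U.map_comp, ← Category.assoc, hk₁2, he'2], by rw [Category.assoc, he'1, hk₁u']⟩, ?_⟩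
    rintro d' ⟨hd1, hd2⟩
    have : e ≫ d' = e' :=
      he'u _ ⟨by rw [Category.assoc, hd2, he1], by rw [U.map_comp, ← Category.assoc, he2, hd1]⟩
    rw [← this, ← Category.assoc, hk₁1, Category.id_comp]
  · intro hS X
    have : ∀ F : Over (U.obj X), HasInitial (StructuredArrow F (Over.post (X := X) U)) := by
      intro F
      obtain ⟨A', n, u, hgen, hfac⟩ := hS X F.left F.hom
      have hn : n ≫ ((Over.post (X := X) U).obj (Over.mk u)).hom = F.hom := by exact hfac
      refine IsInitial.hasInitial (X := StructuredArrow.mk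
        (Y := Over.mk u) (Over.homMk n hn : F ⟶ (Over.post (X := X) U).obj (Over.mk u))) ?_
      have key : ∀ s : StructuredArrow F (Over.post (X := X) U),
          ∃! d : A' ⟶ s.right.left, n ≫ U.map d = s.hom.left ∧ d ≫ s.right.hom = u := by
        intro s
        exact hgen u s.right.hom s.hom.left ((Over.w s.hom).trans hfac.symm)
      refine IsInitial.ofUniqueHom (fun s => StructuredArrow.homMk
        (Over.homMk (key s).choose (key s).choose_spec.1.2) ?_) ?_
      · ext
        exact (key s).choose_spec.1.1
      · intro s m
        ext
        exact (key s).choose_spec.2 m.right.left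
          ⟨by exact congrArg CommaMorphism.left (StructuredArrow.w m), Over.w m.right⟩
    exact ⟨_, ⟨adjunctionOfStructuredArrowInitials (Over.post (X := X) U)⟩⟩
end
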